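/- arXiv:2208.05148 — 2 statements merged into one kernel-verified Lean document; each statement's English description precedes it below -/
import Mathlib

section
/- Let T be a binary tree with n ≥ 1 leaves and let x, y be two distinct leaves of T with at least one branch point on the path from x to y. Then there is a unique branch point b on the path connecting x and y such that, in the decomposition of T obtained by splitting at b into three branches (with the branch containing x listed first and the branch containing y second), the branch containing x has strictly fewer than n/2 leaves of T \ {x,y} and the branch containing y has at most n/2 leaves of T \ {x,y}. (This b is called the semi-centroid relative to (x,y).) -/
open scoped Classical ENNReal
open SimpleGraph MeasureTheory ProbabilityTheory

noncomputable section

/-- A leaf-labeled binary tree with leaf labels in `A`: a finite tree in which every vertex has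
degree 1 or 3, together with a bijective labeling of its degree-1 vertices (leaves) by `A`. -/
structure LBT (A : Type*) where
  n : ℕ
  G : SimpleGraph (Fin n)
  tree : G.IsTree
  deg : ∀ v, G.degree v = 1 ∨ G.degree v = 3
  label : {v : Fin n // G.degree v = 1} ≃ A

/-- Label-preserving isomorphism of leaf-labeled binary trees. -/
def LBT.Equiv {A : Type*} (t s : LBT A) : Prop :=
  ∃ φ : t.G ≃g s.G, ∀ v : {v : Fin t.n // t.G.degree v = 1},
    ∀ h : s.G.degree (φ v.1) = 1, s.label ⟨φ v.1, h⟩ = t.label v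

/-- Leaf-labeled binary trees with leaf set `A`, up to label-preserving isomorphism. -/
def TQ (A : Type*) : Type _ := Quot (@LBT.Equiv A)

instance (A : Type*) : MeasurableSpace (TQ A) := ⊤

/-- The leaf of `t` carrying the label `a`. -/
def LBT.leaf {A : Type*} (t : LBT A) (a : A) : Fin t.n := (t.label.symm a).1

/-- `t.Sep a b c d` : the path from leaf `a` to leaf `b` is vertex-disjoint from the path from
leaf `c` to leaf `d` (i.e. the quartet has topology `ab|cd`). -/
def LBT.Sep {A : Type*} (t : LBT A) (a b c d : A) : Prop :=
  ∃ (p : t.G.Walk (t.leaf a) (t.leaf b)) (q : t.G.Walk (t.leaf c) (t.leaf d)),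
    p.IsPath ∧ q.IsPath ∧ ∀ v ∈ p.support, v ∉ q.support

/-- `s` is (equivalent to) the binary tree induced by `t` on the leaf-label set `e '' univ`,
where the injection `e` prescribes the renaming of labels: this holds iff all quartet topologies
agree, which characterizes the induced subtree. -/
def IsRestrictionAlong {A B : Type*} (t : LBT A) (s : LBT B) (e : B → A) : Prop :=
  Function.Injective e ∧
  ∀ a b c d : B, a ≠ b → a ≠ c → a ≠ d → b ≠ c → b ≠ d → c ≠ d →
    (s.Sep a b c d ↔ t.Sep (e a) (e b) (e c) (e d))

/-- `u` and `v` lie in the same connected component after deleting the vertex `b`. -/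
def SameComp {V : Type*} (G : SimpleGraph V) (b u v : V) : Prop :=
  ∃ p : G.Walk u v, b ∉ p.support

/-- The uniform probability measure on a (finite) type. -/
noncomputable def unif (X : Type*) [MeasurableSpace X] : Measure X :=
  uniformOn (Set.univ : Set X)

/-- `c m = (2m-5)!! = 1·3·5···(2m-5)`, the number of leaf-labeled binary trees on `m` leaves. -/
def numTrees (m : ℕ) : ℕ := Nat.doubleFactorial (2 * m - 5)

end

/-! Index the vertices of the `x`–`y` path by their distance from `x`. In a tree, a leaf `v` lies
in the branch of `x` at the path vertex `b` iff the branch of `v` leaves the path before `b`, and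
where it leaves is read off the distances from `v` to `x` and `y`. Writing `N i` for the number of
leaves branching off before position `i`, the branch of `x` at position `i` holds `N i` leaves and,
by parity of distances in a tree, the branch of `y` holds `n - N (i + 1)`. Since `x` and `y` are
leaves, `N` is monotone with `N 1 = 0` and `N (d(x,y)) = n`, so exactly one position `i` has
`2 N i < n ≤ 2 N (i + 1)`; it is interior to the path, so its vertex has degree 3. -/

section Connected

variable {V : Type*} {G : SimpleGraph V} {b u v w : V}

theorem SameComp.symm (h : SameComp G b u v) : SameComp G b v u := by
  obtain ⟨p, hp⟩ := h
  exact ⟨p.reverse, by simpa using hp⟩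

theorem SameComp.trans (h₁ : SameComp G b u v) (h₂ : SameComp G b v w) : SameComp G b u w := by
  obtain ⟨p, hp⟩ := h₁
  obtain ⟨q, hq⟩ := h₂
  exact ⟨p.append q, by simp [Walk.mem_support_append_iff, hp, hq]⟩

theorem SimpleGraph.Walk.dist_add_dist_le_length (p : G.Walk u w) (hb : b ∈ p.support) :
    G.dist u b + G.dist b w ≤ p.length := by
  rw [← p.take_spec hb, Walk.length_append]
  exact add_le_add (dist_le _) (dist_le _)

theorem SimpleGraph.Reachable.sameComp_of_dist_lt (h : G.Reachable u w)
    (hlt : G.dist u w < G.dist u b + G.dist b w) : SameComp G b u w := by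
  obtain ⟨p, hp⟩ := h.exists_walk_length_eq_dist
  exact ⟨p, fun hb => (p.dist_add_dist_le_length hb).not_gt (hp ▸ hlt)⟩

/-- Every walk leaving a leaf passes through its neighbour. -/
theorem SimpleGraph.Connected.dist_eq_dist_add_one_of_degree_eq_one [Fintype V]
    (hG : G.Connected) (hu : G.degree u = 1) (huv : G.Adj u v) (hw : w ≠ u) :
    G.dist u w = G.dist v w + 1 := by
  have hv : ¬ SameComp G v u w := by
    rintro ⟨q, hq⟩
    have hnil : ¬ q.Nil := fun h => hw h.eq.symm
    have hsnd : q.snd = v :=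
      (degree_eq_one_iff_existsUnique_adj.mp hu).unique (q.adj_snd hnil) huv
    exact hq (hsnd ▸ q.getVert_mem_support 1)
  have hle := mt (hG.preconnected u w).sameComp_of_dist_lt hv
  have htri := hG.dist_triangle (u := u) (v := v) (w := w)
  rw [dist_eq_one_iff_adj.mpr huv] at hle htri
  omega

theorem SimpleGraph.Connected.dist_add_two_le_of_degree_eq_one [Fintype V]
    (hG : G.Connected) (hu : G.degree u = 1) (hv : v ≠ u) (hw : w ≠ u) :
    G.dist v w + 2 ≤ G.dist u v + G.dist u w := by
  obtain ⟨z, huz, -⟩ := degree_eq_one_iff_existsUnique_adj.mp hu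
  have hzv := hG.dist_eq_dist_add_one_of_degree_eq_one hu huz hv
  have hzw := hG.dist_eq_dist_add_one_of_degree_eq_one hu huz hw
  have htri := hG.dist_triangle (u := v) (v := z) (w := w)
  have := G.dist_comm (u := v) (v := z)
  omega

end Connected

section Tree

variable {V : Type*} {G : SimpleGraph V} {b u v w x y : V}

theorem SimpleGraph.IsTree.length_eq_dist_of_isPath (hT : G.IsTree) {p : G.Walk u v}
    (hp : p.IsPath) : p.length = G.dist u v := by
  obtain ⟨q, hq, hlen⟩ := hT.connected.exists_path_of_dist u v
  rw [← hlen, (hT.existsUnique_path u v).unique hp hq]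

theorem SimpleGraph.IsTree.not_sameComp_of_mem_support (hT : G.IsTree) {p : G.Walk u w}
    (hp : p.IsPath) (hb : b ∈ p.support) : ¬ SameComp G b u w := by
  rintro ⟨q, hq⟩
  rw [(hT.existsUnique_path u w).unique hp q.bypass_isPath] at hb
  exact hq (q.support_bypass_subset_support hb)

theorem SimpleGraph.IsTree.sameComp_iff_dist_lt (hT : G.IsTree) :
    SameComp G b u w ↔ G.dist u w < G.dist u b + G.dist b w := by
  refine ⟨fun h => ?_, (hT.connected.preconnected u w).sameComp_of_dist_lt⟩
  obtain ⟨p, hp⟩ := hT.connected.exists_walk_length_eq_dist u b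
  obtain ⟨q, hq⟩ := hT.connected.exists_walk_length_eq_dist b w
  refine lt_of_le_of_ne hT.connected.dist_triangle fun heq => ?_
  have hpq : (p.append q).IsPath :=
    (p.append q).isPath_of_length_eq_dist (by rw [Walk.length_append, hp, hq, heq])
  exact hT.not_sameComp_of_mem_support hpq (by simp) h

theorem SimpleGraph.IsTree.dist_add_dist_eq_of_mem_support (hT : G.IsTree) {p : G.Walk u w}
    (hp : p.IsPath) (hb : b ∈ p.support) : G.dist u b + G.dist b w = G.dist u w :=
  le_antisymm (not_lt.mp (hT.sameComp_iff_dist_lt.not.mp (hT.not_sameComp_of_mem_support hp hb)))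
    hT.connected.dist_triangle

theorem SimpleGraph.IsTree.dist_getVert (hT : G.IsTree) {p : G.Walk u w} (hp : p.IsPath)
    {i : ℕ} (hi : i ≤ p.length) : G.dist u (p.getVert i) = i := by
  rw [← hT.length_eq_dist_of_isPath (hp.take i), Walk.take_length, min_eq_left hi]

theorem SimpleGraph.IsTree.getVert_dist_of_mem_support (hT : G.IsTree) {p : G.Walk u w}
    (hp : p.IsPath) (hb : b ∈ p.support) : p.getVert (G.dist u b) = b := by
  rw [← hT.length_eq_dist_of_isPath (hp.takeUntil hb), Walk.getVert_length_takeUntil]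

theorem SimpleGraph.IsTree.even_dist_add_dist_add_dist (hT : G.IsTree) (u v w : V) :
    Even (G.dist u v + G.dist v w + G.dist w u) := by
  obtain ⟨p, hp⟩ := hT.connected.exists_walk_length_eq_dist u v
  obtain ⟨q, hq⟩ := hT.connected.exists_walk_length_eq_dist v w
  obtain ⟨r, hr⟩ := hT.connected.exists_walk_length_eq_dist w u
  simpa [hp, hq, hr] using
    two_colorable_iff_forall_loop_even.mp hT.colorable_two u ((p.append q).append r)

theorem SimpleGraph.IsTree.sameComp_iff_dist_add_lt (hT : G.IsTree)
    (hb : G.dist x b + G.dist b y = G.dist x y) (v : V) :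
    SameComp G b v x ↔ G.dist x v + G.dist x y < G.dist y v + 2 * G.dist x b := by
  have hxy : ¬ SameComp G b x y := by rw [hT.sameComp_iff_dist_lt]; omega
  have c₁ := G.dist_comm (u := v) (v := x)
  have c₂ := G.dist_comm (u := b) (v := x)
  have c₃ := G.dist_comm (u := v) (v := y)
  have c₄ := G.dist_comm (u := y) (v := b)
  rw [hT.sameComp_iff_dist_lt]
  constructor
  · intro h
    have hvy : ¬ SameComp G b v y := fun h' => hxy ((hT.sameComp_iff_dist_lt.mpr h).symm.trans h')
    rw [hT.sameComp_iff_dist_lt] at hvy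
    omega
  · intro h
    by_contra h'
    have := hT.connected.dist_triangle (u := y) (v := b) (w := v)
    have := G.dist_comm (u := b) (v := v)
    omega

theorem SimpleGraph.Walk.IsPath.two_le_degree_getVert [Fintype V] {p : G.Walk u w}
    (hp : p.IsPath) {i : ℕ} (hi₀ : 0 < i) (hi : i < p.length) : 2 ≤ G.degree (p.getVert i) := by
  have hprev : G.Adj (p.getVert i) (p.getVert (i - 1)) := by
    simpa [Nat.sub_add_cancel hi₀] using (p.adj_getVert_succ (i := i - 1) (by omega)).symm
  have hne : p.getVert (i - 1) ≠ p.getVert (i + 1) := fun h => by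
    have := hp.getVert_injOn (by simp; omega) (by simp; omega) h
    omega
  exact Finset.one_lt_card.mpr ⟨_, (G.mem_neighborFinset _ _).mpr hprev, _,
    (G.mem_neighborFinset _ _).mpr (p.adj_getVert_succ hi), hne⟩

end Tree

section Crossing

variable {α : Type*} [LinearOrder α] {f : ℕ → α} {t : α}

theorem Monotone.exists_lt_le_succ (hf : Monotone f) {a b : ℕ} (ha : f a < t) (hb : t ≤ f b) :
    ∃ i, a ≤ i ∧ i < b ∧ f i < t ∧ t ≤ f (i + 1) := by
  have hex : ∃ j, t ≤ f j := ⟨b, hb⟩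
  have hja : a < Nat.find hex := lt_of_not_ge fun h => ((Nat.find_spec hex).trans (hf h)).not_gt ha
  have hjb : Nat.find hex ≤ b := Nat.find_min' hex hb
  refine ⟨Nat.find hex - 1, by omega, by omega, not_le.mp (Nat.find_min hex (by omega)), ?_⟩
  rw [Nat.sub_add_cancel (by omega)]
  exact Nat.find_spec hex

theorem Monotone.eq_of_lt_le_succ (hf : Monotone f) {i j : ℕ} (hi : f i < t) (hi' : t ≤ f (i + 1))
    (hj : f j < t) (hj' : t ≤ f (j + 1)) : i = j :=
  le_antisymm (not_lt.mp fun h => (hj'.trans (hf h)).not_gt hi)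
    (not_lt.mp fun h => (hi'.trans (hf h)).not_gt hj)

end Crossing

section Leaves

variable {V : Type*} [Fintype V] {G : SimpleGraph V} {b x y : V}

/-- `(d(x,v) + d(x,y) - d(y,v)) / 2`, the Gromov product `(v | y)_x`, is the distance from `x` at
which the branch of `v` leaves the `x`–`y` path. -/
def leavesBranchingBefore (G : SimpleGraph V) (x y : V) (i : ℕ) : Set V :=
  {v | G.degree v = 1 ∧ v ∉ ({x, y} : Set V) ∧ G.dist x v + G.dist x y < G.dist y v + 2 * i}

theorem leavesBranchingBefore_mono : Monotone (leavesBranchingBefore G x y) :=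
  fun _ _ hij _ ⟨h₁, h₂, h₃⟩ => ⟨h₁, h₂, by omega⟩

theorem leavesBranchingBefore_subset (i : ℕ) :
    leavesBranchingBefore G x y i ⊆ {v | G.degree v = 1} \ {x, y} :=
  fun _ ⟨h₁, h₂, _⟩ => ⟨h₁, h₂⟩

theorem SimpleGraph.Connected.leavesBranchingBefore_one (hG : G.Connected)
    (hx : G.degree x = 1) (hxy : x ≠ y) : leavesBranchingBefore G x y 1 = ∅ := by
  refine Set.eq_empty_of_forall_notMem fun v ⟨_, hv, hlt⟩ => ?_
  have := hG.dist_add_two_le_of_degree_eq_one hx (Ne.symm hxy) (fun h => hv (Or.inl h))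
  omega

theorem SimpleGraph.Connected.leavesBranchingBefore_dist (hG : G.Connected)
    (hy : G.degree y = 1) (hxy : x ≠ y) :
    leavesBranchingBefore G x y (G.dist x y) = {v | G.degree v = 1} \ {x, y} := by
  refine (leavesBranchingBefore_subset _).antisymm fun v ⟨h₁, hv⟩ => ⟨h₁, hv, ?_⟩
  have := hG.dist_add_two_le_of_degree_eq_one hy hxy (fun h => hv (Or.inr h))
  have := G.dist_comm (u := x) (v := y)
  omega

theorem SimpleGraph.IsTree.sameComp_left_eq_leavesBranchingBefore (hT : G.IsTree)
    (hb : G.dist x b + G.dist b y = G.dist x y) :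
    {v | G.degree v = 1 ∧ v ∉ ({x, y} : Set V) ∧ SameComp G b v x} =
      leavesBranchingBefore G x y (G.dist x b) := by
  ext v
  simp only [leavesBranchingBefore, Set.mem_ofPred_eq, hT.sameComp_iff_dist_add_lt hb]

/-- The parity of `d(x,v) + d(x,y) - d(y,v)` turns the strict inequality on the `y` side into
the complement of the `x`-side inequality at the next vertex of the path. -/
theorem SimpleGraph.IsTree.sameComp_right_eq_diff_leavesBranchingBefore (hT : G.IsTree)
    (hb : G.dist x b + G.dist b y = G.dist x y) :
    {v | G.degree v = 1 ∧ v ∉ ({x, y} : Set V) ∧ SameComp G b v y} =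
      ({v | G.degree v = 1} \ {x, y}) \ leavesBranchingBefore G x y (G.dist x b + 1) := by
  have c₁ := G.dist_comm (u := x) (v := y)
  have c₂ := G.dist_comm (u := x) (v := b)
  have c₃ := G.dist_comm (u := y) (v := b)
  have hb' : G.dist y b + G.dist b x = G.dist y x := by omega
  ext v
  obtain ⟨r, hr⟩ := hT.even_dist_add_dist_add_dist x v y
  have c₄ := G.dist_comm (u := v) (v := y)
  simp only [leavesBranchingBefore, Set.mem_ofPred_eq, Set.mem_sdiff,
    hT.sameComp_iff_dist_add_lt hb' v]
  constructor
  · rintro ⟨h₁, h₂, h₃⟩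
    exact ⟨⟨h₁, h₂⟩, fun ⟨_, _, h₄⟩ => by omega⟩
  · rintro ⟨⟨h₁, h₂⟩, h₃⟩
    exact ⟨h₁, h₂, by by_contra h₄; exact h₃ ⟨h₁, h₂, by omega⟩⟩

theorem SimpleGraph.IsTree.semiCentroid_condition_iff (hT : G.IsTree) {n : ℕ}
    (hcount : (({v : V | G.degree v = 1} \ {x, y}) : Set V).ncard = n)
    (hb : G.dist x b + G.dist b y = G.dist x y) :
    (2 * {v : V | G.degree v = 1 ∧ v ∉ ({x, y} : Set V) ∧ SameComp G b v x}.ncard < n ∧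
      2 * {v : V | G.degree v = 1 ∧ v ∉ ({x, y} : Set V) ∧ SameComp G b v y}.ncard ≤ n) ↔
    (2 * (leavesBranchingBefore G x y (G.dist x b)).ncard < n ∧
      n ≤ 2 * (leavesBranchingBefore G x y (G.dist x b + 1)).ncard) := by
  have hsplit := Set.ncard_sdiff_add_ncard_of_subset (leavesBranchingBefore_subset (G := G)
    (x := x) (y := y) (G.dist x b + 1))
  rw [hT.sameComp_left_eq_leavesBranchingBefore hb,
    hT.sameComp_right_eq_diff_leavesBranchingBefore hb]
  omega

end Leaves

theorem semiCentroid_exists_unique_general {V : Type*} [Fintype V] (G : SimpleGraph V) (hT : G.IsTree)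
    (hdeg : ∀ v, G.degree v = 1 ∨ G.degree v = 3) (x y : V) (hx : G.degree x = 1)
    (hy : G.degree y = 1) (hxy : x ≠ y) (n : ℕ) (hn : 1 ≤ n)
    (hcount : (({v : V | G.degree v = 1} \ {x, y}) : Set V).ncard = n) :
    ∃! b : V, (G.degree b = 3 ∧ (∃ p : G.Walk x y, p.IsPath ∧ b ∈ p.support)) ∧
      2 * ({v : V | G.degree v = 1 ∧ v ∉ ({x, y} : Set V) ∧ SameComp G b v x}).ncard < n ∧
      2 * ({v : V | G.degree v = 1 ∧ v ∉ ({x, y} : Set V) ∧ SameComp G b v y}).ncard ≤ n := by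
  obtain ⟨p, hp, hlen⟩ := hT.connected.exists_path_of_dist x y
  have hpath : ∀ b, (∃ q : G.Walk x y, q.IsPath ∧ b ∈ q.support) ↔ b ∈ p.support := fun b =>
    ⟨fun ⟨q, hq, hb⟩ => (hT.existsUnique_path x y).unique hq hp ▸ hb, fun hb => ⟨p, hp, hb⟩⟩
  have hmono : Monotone fun i => 2 * (leavesBranchingBefore G x y i).ncard :=
    fun _ _ hij => Nat.mul_le_mul_left 2 (Set.ncard_le_ncard (leavesBranchingBefore_mono hij))
  obtain ⟨i, hi₁, hik, hlt, hle⟩ := hmono.exists_lt_le_succ (t := n) (a := 1) (b := G.dist x y)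
    (by simp only [hT.connected.leavesBranchingBefore_one hx hxy, Set.ncard_empty]; omega)
    (by simp only [hT.connected.leavesBranchingBefore_dist hy hxy, hcount]; omega)
  have hmem := p.getVert_mem_support i
  have hdist : G.dist x (p.getVert i) = i := hT.dist_getVert hp (by omega)
  refine ⟨p.getVert i, ⟨⟨?_, (hpath _).2 hmem⟩, ?_⟩, ?_⟩
  · exact (hdeg _).resolve_left fun h => by
      have := hp.two_le_degree_getVert (by omega) (by omega : i < p.length); omega
  · rw [hT.semiCentroid_condition_iff hcount (hT.dist_add_dist_eq_of_mem_support hp hmem), hdist]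
    exact ⟨hlt, hle⟩
  · rintro b ⟨⟨-, hb⟩, hcond⟩
    rw [hpath] at hb
    obtain ⟨hblt, hble⟩ := (hT.semiCentroid_condition_iff hcount
      (hT.dist_add_dist_eq_of_mem_support hp hb)).1 hcond
    rw [← hT.getVert_dist_of_mem_support hp hb, hmono.eq_of_lt_le_succ hblt hble hlt hle]

/-- existence and uniqueness of the semi-centroid of the path between two leaves
`x, y` of a binary tree: the unique branch point `b` on the `x`–`y` path such that, among the `n`
leaves of `T` other than `x` and `y`, strictly fewer than `n/2` lie in the branch of `x` and at
most `n/2` lie in the branch of `y`. -/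
theorem semiCentroid_exists_unique {V : Type*} [Fintype V] (G : SimpleGraph V) (hT : G.IsTree)
    (hdeg : ∀ v, G.degree v = 1 ∨ G.degree v = 3) (x y : V) (hx : G.degree x = 1)
    (hy : G.degree y = 1) (hxy : x ≠ y) (n : ℕ) (hn : 1 ≤ n)
    (hcount : (({v : V | G.degree v = 1} \ {x, y}) : Set V).ncard = n)
    (hbranch : ∃ b : V, G.degree b = 3 ∧ ∃ p : G.Walk x y, p.IsPath ∧ b ∈ p.support) :
    ∃! b : V, (G.degree b = 3 ∧ (∃ p : G.Walk x y, p.IsPath ∧ b ∈ p.support)) ∧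
      2 * ({v : V | G.degree v = 1 ∧ v ∉ ({x, y} : Set V) ∧ SameComp G b v x}).ncard < n ∧
      2 * ({v : V | G.degree v = 1 ∧ v ∉ ({x, y} : Set V) ∧ SameComp G b v y}).ncard ≤ n :=
  semiCentroid_exists_unique_general G hT hdeg x y hx hy hxy n hn hcount
end

section
/- Fix β' ≥ 0 and ε > 0. Let A ⊆ {1,...,n} and A' ⊆ {1,...,n} be independent uniformly random subsets of sizes a and a' respectively, with εn ≤ a, a' ≤ (1-ε)n. Then for all sufficiently large n (depending only on β' and ε), E[|A ∩ A'|^{β'}] ≥ (1-ε)(a a'/n)^{β'}. -/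
/-!
For a fixed `a'`-set `B` and a uniform `a`-subset `A` of an `n`-set, `X = #(A ∩ B)` has factorial
moments `E (X choose k) = (a choose k) (a' choose k) / (n choose k)` (double count the pairs
`T ⊆ A ∩ B`), so `E X = μ := a a' / n` and `Var X ≤ μ`. By Chebyshev, `X ≥ (1 - δ) μ` outside an
event of probability at most `1 / (δ² μ)`, whence `E X^β ≥ ((1 - δ) μ)^β (1 - 1 / (δ² μ))`. As
`μ ≥ ε² n`, choosing `δ` with `(1 - δ)^β > 1 - ε/2` and then `n` large makes this at least
`(1 - ε/2)² μ^β ≥ (1 - ε) μ^β`.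
-/

open scoped Classical ENNReal
open SimpleGraph MeasureTheory ProbabilityTheory

open Finset Filter Topology

theorem rpow_mul_one_sub_sq_div_le_rpow {x μ δ β : ℝ} (hx : 0 ≤ x) (hμ : 0 < μ)
    (hδ : δ ∈ Set.Ioo 0 1) (hβ : 0 ≤ β) :
    ((1 - δ) * μ) ^ β * (1 - (x - μ) ^ 2 / (δ * μ) ^ 2) ≤ x ^ β := by
  obtain ⟨hδ₀, hδ₁⟩ := hδ
  have hm : 0 ≤ (1 - δ) * μ := mul_nonneg (by linarith) hμ.le
  rcases le_or_gt ((1 - δ) * μ) x with hle | hlt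
  · calc ((1 - δ) * μ) ^ β * (1 - (x - μ) ^ 2 / (δ * μ) ^ 2)
        ≤ ((1 - δ) * μ) ^ β * 1 := by gcongr; exact sub_le_self _ (by positivity)
      _ ≤ x ^ β := by rw [mul_one]; exact Real.rpow_le_rpow hm hle hβ
  · have hdev : (δ * μ) ^ 2 ≤ (x - μ) ^ 2 := by
      rw [← neg_sub, neg_sq]
      exact pow_le_pow_left₀ (by positivity) (by linarith) 2
    have : 1 - (x - μ) ^ 2 / (δ * μ) ^ 2 ≤ 0 := by
      rw [sub_nonpos, one_le_div (by positivity)]; exact hdev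
    exact (mul_nonpos_of_nonneg_of_nonpos (by positivity) this).trans (by positivity)

theorem mul_card_sub_div_le_sum_rpow {ι : Type*} {s : Finset ι} {f : ι → ℝ} {μ δ β V : ℝ}
    (hf : ∀ i ∈ s, 0 ≤ f i) (hμ : 0 < μ) (hδ : δ ∈ Set.Ioo 0 1) (hβ : 0 ≤ β)
    (hV : ∑ i ∈ s, (f i - μ) ^ 2 ≤ V) :
    ((1 - δ) * μ) ^ β * (#s - V / (δ * μ) ^ 2) ≤ ∑ i ∈ s, f i ^ β := by
  calc ((1 - δ) * μ) ^ β * (#s - V / (δ * μ) ^ 2)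
      ≤ ((1 - δ) * μ) ^ β * (#s - (∑ i ∈ s, (f i - μ) ^ 2) / (δ * μ) ^ 2) := by
        have : 0 ≤ (1 - δ) * μ := mul_nonneg (by linarith [hδ.2]) hμ.le
        gcongr
    _ = ∑ i ∈ s, ((1 - δ) * μ) ^ β * (1 - (f i - μ) ^ 2 / (δ * μ) ^ 2) := by
        rw [← mul_sum, sum_sub_distrib, sum_div, sum_const, nsmul_one]
    _ ≤ ∑ i ∈ s, f i ^ β :=
        sum_le_sum fun i hi => rpow_mul_one_sub_sq_div_le_rpow (hf i hi) hμ hδ hβ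

theorem exists_mem_Ioo_lt_one_sub_rpow (β : ℝ) {η : ℝ} (hη : η < 1) :
    ∃ δ ∈ Set.Ioo (0 : ℝ) 1, η < (1 - δ) ^ β := by
  have hcont : ContinuousAt (fun δ : ℝ => (1 - δ) ^ β) 0 :=
    (continuousAt_const.sub continuousAt_id).rpow_const (Or.inl (by norm_num))
  have hev : ∀ᶠ δ in 𝓝 (0 : ℝ), η < (1 - δ) ^ β :=
    hcont.eventually (lt_mem_nhds (by simpa using hη))
  exact ((hev.filter_mono nhdsWithin_le_nhds).and (Ioo_mem_nhdsGT one_pos)).exists.imp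
    fun δ h => ⟨h.2, h.1⟩

theorem sq_mul_le_mul_div {ε n x y : ℝ} (hε : 0 ≤ ε) (hn : 0 < n) (hx : ε * n ≤ x)
    (hy : ε * n ≤ y) : ε ^ 2 * n ≤ x * y / n := by
  rw [le_div_iff₀ hn]
  nlinarith [mul_le_mul hx hy (by positivity) ((by positivity : 0 ≤ ε * n).trans hx)]

theorem one_sub_mul_rpow_le_rpow_mul_one_sub_div {ε δ μ β : ℝ} (hε : ε ≤ 2)
    (hδ : δ ∈ Set.Ioo 0 1) (hδβ : 1 - ε / 2 ≤ (1 - δ) ^ β) (hμ : 0 < μ)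
    (hεμ : 2 ≤ ε * δ ^ 2 * μ) :
    (1 - ε) * μ ^ β ≤ ((1 - δ) * μ) ^ β * (1 - 1 / (δ ^ 2 * μ)) := by
  obtain ⟨hδ₀, hδ₁⟩ := hδ
  have hdev : 1 - ε / 2 ≤ 1 - 1 / (δ ^ 2 * μ) := by
    rw [sub_le_sub_iff_left, div_le_iff₀ (by positivity)]; linarith
  rw [Real.mul_rpow (by linarith) hμ.le]
  calc (1 - ε) * μ ^ β ≤ (1 - ε / 2) * (1 - ε / 2) * μ ^ β :=
        mul_le_mul_of_nonneg_right (by nlinarith [sq_nonneg ε]) (by positivity)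
    _ ≤ (1 - δ) ^ β * (1 - 1 / (δ ^ 2 * μ)) * μ ^ β :=
        mul_le_mul_of_nonneg_right
          (mul_le_mul hδβ hdev (by linarith) (Real.rpow_nonneg (by linarith) _)) (by positivity)
    _ = ((1 - δ) ^ β * μ ^ β) * (1 - 1 / (δ ^ 2 * μ)) := by ring

section Hypergeometric

variable {α : Type*} [DecidableEq α] {t B : Finset α} {a : ℕ}

theorem sum_powersetCard_choose_card_inter (hB : B ⊆ t) {k : ℕ} (hka : k ≤ a) :
    ∑ A ∈ t.powersetCard a, (#(A ∩ B)).choose k = (#B).choose k * (#t - k).choose (a - k) := by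
  calc ∑ A ∈ t.powersetCard a, (#(A ∩ B)).choose k
      = ∑ A ∈ t.powersetCard a, ∑ _T ∈ (A ∩ B).powersetCard k, 1 := by
        simp only [sum_const, card_powersetCard, smul_eq_mul, mul_one]
    _ = ∑ T ∈ B.powersetCard k, ∑ _A ∈ (t.powersetCard a).filter (T ⊆ ·), 1 :=
        sum_comm' fun A T => by
          simp only [mem_powersetCard, mem_filter, subset_inter_iff]
          tauto
    _ = ∑ _T ∈ B.powersetCard k, (#t - k).choose (a - k) := sum_congr rfl fun T hT => by
        obtain ⟨hTB, rfl⟩ := mem_powersetCard.mp hT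
        rw [sum_const, smul_eq_mul, mul_one,
          card_filter_powersetCard_subset T t a (hTB.trans hB) hka]
    _ = (#B).choose k * (#t - k).choose (a - k) := by
        rw [sum_const, card_powersetCard, smul_eq_mul]

theorem sum_powersetCard_choose_card_inter_mul_choose (hB : B ⊆ t) (k : ℕ) :
    (∑ A ∈ t.powersetCard a, (#(A ∩ B)).choose k) * (#t).choose k =
      (#B).choose k * a.choose k * (#t).choose a := by
  rcases le_or_gt k a with hka | hak
  · rw [sum_powersetCard_choose_card_inter hB hka, mul_assoc, mul_assoc, mul_comm _ ((#t).choose k),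
      ← Nat.choose_mul hka]
    ring
  · have hA : ∀ A ∈ t.powersetCard a, (#(A ∩ B)).choose k = 0 := fun A hA =>
      Nat.choose_eq_zero_of_lt <| (card_le_card inter_subset_left).trans_lt <|
        (mem_powersetCard.mp hA).2 ▸ hak
    rw [sum_eq_zero hA, Nat.choose_eq_zero_of_lt hak]
    simp

theorem sum_powersetCard_card_inter_mul_card (hB : B ⊆ t) :
    (∑ A ∈ t.powersetCard a, (#(A ∩ B) : ℝ)) * #t = #B * a * (#t).choose a := by
  have h := sum_powersetCard_choose_card_inter_mul_choose (a := a) hB 1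
  simp only [Nat.choose_one_right] at h
  exact_mod_cast h

theorem sum_powersetCard_card_inter_mul_pred (hB : B ⊆ t) :
    (∑ A ∈ t.powersetCard a, (#(A ∩ B) : ℝ) * (#(A ∩ B) - 1)) * (#t * (#t - 1)) =
      #B * (#B - 1) * (a * (a - 1)) * (#t).choose a := by
  have h := congrArg (Nat.cast : ℕ → ℝ)
    (sum_powersetCard_choose_card_inter_mul_choose (a := a) hB 2)
  push_cast [Nat.cast_choose_two] at h
  rw [← sum_div] at h
  linear_combination 4 * h

theorem sum_powersetCard_sq_card_inter_sub_le (hB : B ⊆ t) (ht : 2 ≤ #t) :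
    ∑ A ∈ t.powersetCard a, ((#(A ∩ B) : ℝ) - a * #B / #t) ^ 2 ≤
      a * #B / #t * (#t).choose a := by
  have hn : (2 : ℝ) ≤ #t := by exact_mod_cast ht
  set μ : ℝ := a * #B / #t
  set C : ℝ := ↑((#t).choose a)
  have hS1 : ∑ A ∈ t.powersetCard a, (#(A ∩ B) : ℝ) = μ * C := by
    rw [eq_comm, div_mul_eq_mul_div, div_eq_iff (by positivity),
      sum_powersetCard_card_inter_mul_card hB]
    ring
  have hpoly : (a : ℝ) * (a - 1) * (#B * (#B - 1)) * #t ≤ a ^ 2 * #B ^ 2 * (#t - 1) := by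
    have hB₁ : (0 : ℝ) ≤ #B * (#B - 1) := by
      rcases Nat.eq_zero_or_pos #B with h | h
      · simp [h]
      · exact mul_nonneg (by positivity) (sub_nonneg.mpr (Nat.one_le_cast.mpr h))
    have h₁ : (0 : ℝ) ≤ a * (#B * (#B - 1)) * #t := by positivity
    have h₂ : (0 : ℝ) ≤ a ^ 2 * #B * (#t - #B) :=
      mul_nonneg (by positivity) (sub_nonneg.mpr (by exact_mod_cast card_le_card hB))
    linear_combination h₁ + h₂
  have hS2 : ∑ A ∈ t.powersetCard a, (#(A ∩ B) : ℝ) * (#(A ∩ B) - 1) ≤ μ ^ 2 * C := by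
    have hpos : (0 : ℝ) < #t ^ 2 * (#t - 1) := by nlinarith
    rw [← mul_le_mul_iff_left₀ hpos]
    have h₂ := sum_powersetCard_card_inter_mul_pred (a := a) hB
    calc (∑ A ∈ t.powersetCard a, (#(A ∩ B) : ℝ) * (#(A ∩ B) - 1)) * (#t ^ 2 * (#t - 1))
        = (a * (a - 1) * (#B * (#B - 1)) * #t) * C := by linear_combination #t * h₂
      _ ≤ (a ^ 2 * #B ^ 2 * (#t - 1)) * C := by gcongr
      _ = μ ^ 2 * C * (#t ^ 2 * (#t - 1)) := by simp only [μ]; field_simp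
  calc ∑ A ∈ t.powersetCard a, ((#(A ∩ B) : ℝ) - μ) ^ 2
      = ∑ A ∈ t.powersetCard a, (#(A ∩ B) : ℝ) * (#(A ∩ B) - 1) +
          (1 - 2 * μ) * ∑ A ∈ t.powersetCard a, (#(A ∩ B) : ℝ) + μ ^ 2 * C := by
        have hC : μ ^ 2 * C = ∑ _A ∈ t.powersetCard a, μ ^ 2 := by
          rw [sum_const, card_powersetCard, nsmul_eq_mul, mul_comm]
        rw [mul_sum, ← sum_add_distrib, hC, ← sum_add_distrib]
        exact sum_congr rfl fun _ _ => by ring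
    _ ≤ μ * C := by rw [hS1]; nlinarith

theorem sum_powersetCard_rpow_card_inter_ge (hB : B ⊆ t) (ht : 2 ≤ #t) {δ β : ℝ}
    (hμ : 0 < (a * #B / #t : ℝ)) (hδ : δ ∈ Set.Ioo 0 1) (hβ : 0 ≤ β) :
    ((1 - δ) * (a * #B / #t)) ^ β * (1 - 1 / (δ ^ 2 * (a * #B / #t))) * (#t).choose a ≤
      ∑ A ∈ t.powersetCard a, (#(A ∩ B) : ℝ) ^ β := by
  have h := mul_card_sub_div_le_sum_rpow (s := t.powersetCard a) (f := fun A => (#(A ∩ B) : ℝ))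
    (fun _ _ => Nat.cast_nonneg _) hμ hδ hβ (sum_powersetCard_sq_card_inter_sub_le hB ht)
  rw [card_powersetCard] at h
  refine le_trans (le_of_eq ?_) h
  have hδ₀ : δ ≠ 0 := hδ.1.ne'
  rw [mul_assoc]
  congr 1
  field_simp

end Hypergeometric

/-- for independent uniform random subsets `A, A'` of `{1,…,n}` of sizes
`a, a' ∈ [εn, (1-ε)n]`, for all sufficiently large `n` (depending only on `β'` and `ε`),
`E[|A ∩ A'|^{β'}] ≥ (1-ε)(a a'/n)^{β'}`. -/
theorem hypergeometric_moment_lower_bound (β' : ℝ) (hβ : 0 ≤ β') (ε : ℝ) (hε : 0 < ε) :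
    ∃ N : ℕ, ∀ n : ℕ, N ≤ n → ∀ a a' : ℕ,
      ε * n ≤ (a : ℝ) → (a : ℝ) ≤ (1 - ε) * n →
      ε * n ≤ (a' : ℝ) → (a' : ℝ) ≤ (1 - ε) * n →
      (1 - ε) * (((a : ℝ) * (a' : ℝ)) / n) ^ β' ≤
        (∑ A ∈ Finset.powersetCard a (Finset.univ : Finset (Fin n)),
          ∑ A' ∈ Finset.powersetCard a' (Finset.univ : Finset (Fin n)),
            (((A ∩ A').card : ℝ)) ^ β') /
          ((n.choose a : ℝ) * (n.choose a' : ℝ)) := by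
  obtain ⟨δ, hδ, hδβ⟩ := exists_mem_Ioo_lt_one_sub_rpow β' (show 1 - ε / 2 < 1 by linarith)
  have hδ₀ : 0 < δ := hδ.1
  refine ⟨⌈2 / (δ ^ 2 * ε ^ 3)⌉₊ + 2, fun n hn a a' ha₀ ha₁ ha'₀ ha'₁ => ?_⟩
  have hn₀ : (0 : ℝ) < n := by exact_mod_cast (show 0 < n by omega)
  have hnN : 2 ≤ δ ^ 2 * ε ^ 3 * n := by
    rw [← div_le_iff₀' (by positivity)]
    exact Nat.ceil_le.mp (by omega)
  have hε₂ : ε ≤ 1 / 2 := by nlinarith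
  set μ : ℝ := a * a' / n
  have hμ₀ : 0 < μ := div_pos (mul_pos (by nlinarith) (by nlinarith)) hn₀
  have hμ : 2 ≤ ε * δ ^ 2 * μ := by
    nlinarith [sq_mul_le_mul_div hε.le hn₀ ha₀ ha'₀, mul_pos hε (pow_pos hδ₀ 2)]
  have hB : ∀ B ∈ powersetCard a' (univ : Finset (Fin n)),
      (1 - ε) * μ ^ β' * n.choose a ≤ ∑ A ∈ powersetCard a univ, (#(A ∩ B) : ℝ) ^ β' := by
    intro B hB
    have hcard : #B = a' := (mem_powersetCard.mp hB).2
    have hcheb := sum_powersetCard_rpow_card_inter_ge (a := a) (subset_univ B)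
      (by simpa using (show 2 ≤ n by omega)) (by simpa [hcard] using hμ₀) hδ hβ
    simp only [card_univ, Fintype.card_fin, hcard] at hcheb
    refine le_trans (mul_le_mul_of_nonneg_right ?_ (by positivity)) hcheb
    exact one_sub_mul_rpow_le_rpow_mul_one_sub_div (by linarith) hδ hδβ.le hμ₀ hμ
  have hC : ∀ b : ℕ, (b : ℝ) ≤ (1 - ε) * n → (0 : ℝ) < n.choose b := fun b hb => by
    exact_mod_cast Nat.choose_pos (by exact_mod_cast (show (b : ℝ) ≤ n by nlinarith))
  rw [le_div_iff₀ (mul_pos (hC a ha₁) (hC a' ha'₁)), sum_comm]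
  calc (1 - ε) * μ ^ β' * (n.choose a * n.choose a')
      = ∑ _B ∈ powersetCard a' (univ : Finset (Fin n)), (1 - ε) * μ ^ β' * n.choose a := by
        rw [sum_const, card_powersetCard, card_univ, Fintype.card_fin, nsmul_eq_mul]; ring
    _ ≤ _ := sum_le_sum hB
end
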